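/- arXiv:1801.04739 — 2 statements merged into one kernel-verified Lean document; each statement's English description precedes it below -/
import Mathlib

section
/- (Path coupling, contraction case) Let φ : Ω × Ω → {0,…,D} be an integer-valued metric on a finite set Ω and U ⊆ Ω × Ω a set of pairs such that any pair (x,y) is joined by a path x = z_0, z_1, …, z_r = y with (z_i, z_{i+1}) ∈ U and ∑ φ(z_i, z_{i+1}) = φ(x,y). Suppose a Markovian coupling (X_t, Y_t) → (X_{t+1}, Y_{t+1}) satisfies E[φ(X_{t+1}, Y_{t+1})] ≤ β φ(X_t, Y_t) for all pairs in U, with β < 1. Then E[φ(X_{t+1}, Y_{t+1})] ≤ β φ(X_t, Y_t) for ALL pairs (X_t, Y_t) ∈ Ω × Ω. -/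
/-!
Join `x` to `y` by a `U`-path `z₀, …, z_r` along which `φ` is additive. For every outcome `a`
of the update, the triangle inequality bounds `φ (f a x) (f a y)` by the sum of the
`φ (f a zᵢ) (f a zᵢ₊₁)`; averaging over `a` (linearity of expectation) and contracting each
step, which lies in `U`, gives at most `β * ∑ φ zᵢ zᵢ₊₁ = β * φ x y`.
-/

open Finset

theorem le_sum_range_of_triangle {Ω M : Type*} [AddCommMonoid M] [PartialOrder M]
    [IsOrderedAddMonoid M] (d : Ω → Ω → M) (hself : ∀ x, d x x = 0)
    (htri : ∀ x y z, d x z ≤ d x y + d y z) (z : ℕ → Ω) (r : ℕ) :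
    d (z 0) (z r) ≤ ∑ i ∈ range r, d (z i) (z (i + 1)) := by
  induction r with
  | zero => simp [hself]
  | succ n ih =>
    rw [sum_range_succ]
    exact (htri _ (z n) _).trans (add_le_add_left ih _)

theorem sum_mul_le_sum_range_sum_mul_of_triangle {Ω α : Type*} [Fintype α]
    (d : Ω → Ω → ℝ) (hself : ∀ x, d x x = 0) (htri : ∀ x y z, d x z ≤ d x y + d y z)
    (p : α → ℝ) (hp0 : ∀ a, 0 ≤ p a) (f : α → Ω → Ω) (z : ℕ → Ω) (r : ℕ) :
    ∑ a, p a * d (f a (z 0)) (f a (z r)) ≤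
      ∑ i ∈ range r, ∑ a, p a * d (f a (z i)) (f a (z (i + 1))) := by
  rw [sum_comm]
  gcongr with a
  rw [← mul_sum]
  exact mul_le_mul_of_nonneg_left
    (le_sum_range_of_triangle d hself htri (fun i => f a (z i)) r) (hp0 a)

theorem path_coupling_contraction_general
    {Ω α : Type*} [Fintype α]
    (φ : Ω → Ω → ℕ)
    (hφ0 : ∀ x y, φ x y = 0 ↔ x = y)
    (hφtri : ∀ x y z, φ x z ≤ φ x y + φ y z)
    (U : Set (Ω × Ω))
    (hpath : ∀ x y : Ω, ∃ (r : ℕ) (z : ℕ → Ω), z 0 = x ∧ z r = y ∧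
      (∀ i < r, (z i, z (i + 1)) ∈ U) ∧
      ∑ i ∈ Finset.range r, φ (z i) (z (i + 1)) = φ x y)
    (p : α → ℝ) (hp0 : ∀ a, 0 ≤ p a)
    (f : α → Ω → Ω)
    (β : ℝ)
    (hU : ∀ x y : Ω, (x, y) ∈ U →
      ∑ a, p a * (φ (f a x) (f a y) : ℝ) ≤ β * (φ x y : ℝ)) :
    ∀ x y : Ω, ∑ a, p a * (φ (f a x) (f a y) : ℝ) ≤ β * (φ x y : ℝ) := by
  intro x y
  obtain ⟨r, z, rfl, rfl, hzU, hzsum⟩ := hpath x y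
  have hself : ∀ x, (φ x x : ℝ) = 0 := fun x => by simp [hφ0]
  have htri : ∀ x y w, (φ x w : ℝ) ≤ φ x y + φ y w := fun x y w => by exact_mod_cast hφtri x y w
  calc ∑ a, p a * (φ (f a (z 0)) (f a (z r)) : ℝ)
      ≤ ∑ i ∈ range r, ∑ a, p a * (φ (f a (z i)) (f a (z (i + 1))) : ℝ) :=
        sum_mul_le_sum_range_sum_mul_of_triangle _ hself htri p hp0 f z r
    _ ≤ ∑ i ∈ range r, β * (φ (z i) (z (i + 1)) : ℝ) :=
        sum_le_sum fun i hi => hU _ _ (hzU i (mem_range.mp hi))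
    _ = β * (φ (z 0) (z r) : ℝ) := by
        rw [← mul_sum, ← hzsum]
        push_cast
        rfl

/-- **Path coupling (contraction case).** If `φ` is an integer-valued metric bounded by
`D` on a finite set `Ω`, every pair is joined by a `U`-path along which `φ` is additive,
and a Markovian coupling (given by a random update function `f` applied to both
coordinates) contracts `φ` in expectation by a factor `β < 1` on all pairs in `U`, then
it contracts `φ` by the factor `β` on ALL pairs. -/
theorem path_coupling_contraction
    {Ω α : Type*} [Fintype Ω] [DecidableEq Ω] [Fintype α]
    (D : ℕ) (φ : Ω → Ω → ℕ)
    (hφ0 : ∀ x y, φ x y = 0 ↔ x = y)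
    (hφsymm : ∀ x y, φ x y = φ y x)
    (hφtri : ∀ x y z, φ x z ≤ φ x y + φ y z)
    (hφD : ∀ x y, φ x y ≤ D)
    (U : Set (Ω × Ω))
    (hpath : ∀ x y : Ω, ∃ (r : ℕ) (z : ℕ → Ω), z 0 = x ∧ z r = y ∧
      (∀ i < r, (z i, z (i + 1)) ∈ U) ∧
      ∑ i ∈ Finset.range r, φ (z i) (z (i + 1)) = φ x y)
    (p : α → ℝ) (hp0 : ∀ a, 0 ≤ p a) (hp1 : ∑ a, p a = 1)
    (f : α → Ω → Ω)
    (β : ℝ) (hβ0 : 0 ≤ β) (hβ1 : β < 1)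
    (hU : ∀ x y : Ω, (x, y) ∈ U →
      ∑ a, p a * (φ (f a x) (f a y) : ℝ) ≤ β * (φ x y : ℝ)) :
    ∀ x y : Ω, ∑ a, p a * (φ (f a x) (f a y) : ℝ) ≤ β * (φ x y : ℝ) :=
  path_coupling_contraction_general φ hφ0 hφtri U hpath p hp0 f β hU
end

section
/- If a nonnegative integer-valued stochastic process (D_t) bounded by D satisfies E[D_{t+1} | D_t] ≤ D_t (supermartingale) and P(D_{t+1} ≠ D_t | D_t = d) ≥ α for all d ≥ 1, then the expected hitting time of 0 from any starting value is at most D²/α. -/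
/-!
A potential `φ` with `φ z = 0` that drops by at least `1` in expectation at every step away
from `z` dominates the expected hitting time `h` of `z`: for `c > 1` the function `h - c φ`
strictly increases in expectation off `z`, so by the maximum principle it is maximal at `z`,
where it vanishes. For the process of the theorem the potential is `(2 D e - e²) / α`: its
expected decrease from `d` is the conditional second moment `E[(D_{t+1} - d)²] ≥ α` plus the
nonnegative term `2 (D - d) (d - E[D_{t+1}])`, and it is at most `D² / α`.
-/

open Finset Filter Topology

section MaximumPrinciple

variable {ι : Type*} [Fintype ι] {q : ι → ι → ℝ}

theorem forall_le_of_lt_sum_mul_of_ne (hq0 : ∀ i j, 0 ≤ q i j) (hq1 : ∀ i, ∑ j, q i j = 1)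
    {z : ι} {u : ι → ℝ} {δ : ℝ} (hδ : 0 < δ) (hu : ∀ i, i ≠ z → u i + δ ≤ ∑ j, q i j * u j) :
    ∀ i, u i ≤ u z := by
  obtain ⟨m, -, hm⟩ := exists_max_image univ u ⟨z, mem_univ z⟩
  obtain rfl | hmz := eq_or_ne m z
  · exact fun i => hm i (mem_univ i)
  have : ∑ j, q m j * u j ≤ u m :=
    calc ∑ j, q m j * u j ≤ ∑ j, q m j * u m :=
          sum_le_sum fun j _ => mul_le_mul_of_nonneg_left (hm j (mem_univ j)) (hq0 m j)
      _ = u m := by rw [← sum_mul, hq1, one_mul]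
  linarith [hu m hmz]

theorem le_of_hittingTime_recurrence_of_drift (hq0 : ∀ i j, 0 ≤ q i j)
    (hq1 : ∀ i, ∑ j, q i j = 1) {z : ι} {h φ : ι → ℝ} (hhz : h z = 0)
    (hrec : ∀ i, i ≠ z → h i = 1 + ∑ j, q i j * h j) (hφz : φ z = 0)
    (hdrift : ∀ i, i ≠ z → 1 + ∑ j, q i j * φ j ≤ φ i) (i : ι) :
    h i ≤ φ i := by
  have hscaled : ∀ c : ℝ, 1 < c → h i ≤ c * φ i := by
    intro c hc
    have hu : ∀ k, k ≠ z → (h k - c * φ k) + (c - 1) ≤ ∑ j, q k j * (h j - c * φ j) := by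
      intro k hk
      have hsum : ∑ j, q k j * (h j - c * φ j) = ∑ j, q k j * h j - c * ∑ j, q k j * φ j := by
        rw [mul_sum, ← sum_sub_distrib]
        exact sum_congr rfl fun j _ => by ring
      rw [hsum, hrec k hk]
      linarith [mul_le_mul_of_nonneg_left (hdrift k hk) (zero_le_one.trans hc.le)]
    have := forall_le_of_lt_sum_mul_of_ne hq0 hq1 (sub_pos.2 hc) hu i
    rw [hhz, hφz, mul_zero, sub_zero] at this
    linarith
  have hlim : Tendsto (fun c : ℝ => c * φ i) (𝓝[>] 1) (𝓝 (1 * φ i)) :=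
    tendsto_nhdsWithin_of_tendsto_nhds ((continuous_mul_const (φ i)).tendsto 1)
  simpa using ge_of_tendsto hlim (eventually_nhdsWithin_of_forall hscaled)

end MaximumPrinciple

theorem sum_mul_sub_sum_mul_quadratic {ι : Type*} [Fintype ι] {p : ι → ℝ}
    (hp1 : ∑ i, p i = 1) (x : ι → ℝ) (y D : ℝ) :
    (2 * D * y - y ^ 2) - ∑ i, p i * (2 * D * x i - x i ^ 2)
      = ∑ i, p i * (x i - y) ^ 2 + 2 * (D - y) * (y - ∑ i, p i * x i) := by
  have hexpand : ∀ i, p i * (x i - y) ^ 2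
      = -(p i * (2 * D * x i - x i ^ 2)) + 2 * (D - y) * (p i * x i) + y ^ 2 * p i := by
    intro i; ring
  simp only [hexpand, sum_add_distrib, sum_neg_distrib, ← mul_sum, hp1]
  ring

theorem sum_filter_ne_le_sum_mul_sq_sub {n : ℕ} {p : Fin n → ℝ} (hp0 : ∀ e, 0 ≤ p e)
    (d : Fin n) : ∑ e ∈ univ.filter (fun e => e ≠ d), p e ≤ ∑ e, p e * ((e : ℝ) - d) ^ 2 := by
  calc ∑ e ∈ univ.filter (fun e => e ≠ d), p e
      ≤ ∑ e ∈ univ.filter (fun e => e ≠ d), p e * ((e : ℝ) - d) ^ 2 := by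
        refine sum_le_sum fun e he => le_mul_of_one_le_right (hp0 e) ?_
        have hne : (e : ℤ) ≠ (d : ℤ) := by exact_mod_cast Fin.val_ne_of_ne (mem_filter.1 he).2
        have hsq : (1 : ℤ) ≤ ((e : ℤ) - d) ^ 2 :=
          (one_le_sq_iff_one_le_abs _).2 (Int.one_le_abs (sub_ne_zero.2 hne))
        exact_mod_cast hsq
    _ ≤ ∑ e, p e * ((e : ℝ) - d) ^ 2 :=
        sum_le_sum_of_subset_of_nonneg (filter_subset _ _)
          fun e _ _ => mul_nonneg (hp0 e) (sq_nonneg _)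

theorem sum_filter_ne_le_quadratic_drift {D : ℕ} {p : Fin (D + 1) → ℝ} (hp0 : ∀ e, 0 ≤ p e)
    (hp1 : ∑ e, p e = 1) (d : Fin (D + 1)) (hsuper : ∑ e, p e * (e : ℝ) ≤ d) :
    ∑ e ∈ univ.filter (fun e => e ≠ d), p e
      ≤ (2 * D * d - (d : ℝ) ^ 2) - ∑ e, p e * (2 * D * e - (e : ℝ) ^ 2) := by
  have hdD : (d : ℝ) ≤ D := by exact_mod_cast Nat.lt_succ_iff.1 d.isLt
  rw [sum_mul_sub_sum_mul_quadratic hp1 (fun e : Fin (D + 1) => (e : ℝ)) d D]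
  have hnonneg : 0 ≤ 2 * ((D : ℝ) - d) * (d - ∑ e, p e * (e : ℝ)) := by
    have := sub_nonneg.2 hdD
    have := sub_nonneg.2 hsuper
    positivity
  linarith [sum_filter_ne_le_sum_mul_sq_sub hp0 d]

theorem hitting_time_bound_supermartingale_general
    (D : ℕ) (α : ℝ) (hα : 0 < α)
    (q : Fin (D + 1) → Fin (D + 1) → ℝ)
    (hq0 : ∀ d e, 0 ≤ q d e) (hq1 : ∀ d, ∑ e, q d e = 1)
    (hsuper : ∀ d : Fin (D + 1), ∑ e, q d e * (e : ℝ) ≤ (d : ℝ))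
    (hmove : ∀ d : Fin (D + 1), d ≠ 0 →
      α ≤ ∑ e ∈ Finset.univ.filter (fun e => e ≠ d), q d e)
    (h : Fin (D + 1) → ℝ)
    (hh0 : h 0 = 0)
    (hrec : ∀ d : Fin (D + 1), d ≠ 0 → h d = 1 + ∑ e, q d e * h e) :
    ∀ d, h d ≤ (D : ℝ) ^ 2 / α := by
  set φ : Fin (D + 1) → ℝ := fun e => (2 * D * e - (e : ℝ) ^ 2) / α
  have hdrift : ∀ d, d ≠ 0 → 1 + ∑ e, q d e * φ e ≤ φ d := by
    intro d hd
    have hφsum : ∑ e, q d e * φ e = (∑ e, q d e * (2 * D * e - (e : ℝ) ^ 2)) / α := by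
      simp only [φ, mul_div_assoc', sum_div]
    rw [hφsum, show φ d = (2 * D * d - (d : ℝ) ^ 2) / α from rfl, le_div_iff₀ hα, add_mul,
      one_mul, div_mul_cancel₀ _ hα.ne']
    linarith [(hmove d hd).trans (sum_filter_ne_le_quadratic_drift (hq0 d) (hq1 d) d (hsuper d))]
  intro d
  calc h d ≤ φ d := le_of_hittingTime_recurrence_of_drift hq0 hq1 hh0 hrec (by simp [φ]) hdrift d
    _ ≤ (D : ℝ) ^ 2 / α := by
        show (2 * D * d - (d : ℝ) ^ 2) / α ≤ _
        gcongr
        nlinarith [sq_nonneg ((D : ℝ) - d)]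

/-- **Hitting time of a bounded non-expansive integer process.** Consider a Markov
chain on `{0, …, D}` with transition kernel `q`, with `0` absorbing, which is a
supermartingale (`E[D_{t+1} | D_t = d] ≤ d`) and moves with probability at least `α`
from every state `d ≥ 1`. Then the expected hitting time of `0` (the solution `h` of the
standard hitting-time recurrence) from any starting value is at most `D²/α`. -/
theorem hitting_time_bound_supermartingale
    (D : ℕ) (hD : 1 ≤ D) (α : ℝ) (hα : 0 < α)
    (q : Fin (D + 1) → Fin (D + 1) → ℝ)
    (hq0 : ∀ d e, 0 ≤ q d e) (hq1 : ∀ d, ∑ e, q d e = 1)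
    (habs : q 0 0 = 1)
    (hsuper : ∀ d : Fin (D + 1), ∑ e, q d e * (e : ℝ) ≤ (d : ℝ))
    (hmove : ∀ d : Fin (D + 1), d ≠ 0 →
      α ≤ ∑ e ∈ Finset.univ.filter (fun e => e ≠ d), q d e)
    (h : Fin (D + 1) → ℝ)
    (hh0 : h 0 = 0) (hhnonneg : ∀ d, 0 ≤ h d)
    (hrec : ∀ d : Fin (D + 1), d ≠ 0 → h d = 1 + ∑ e, q d e * h e) :
    ∀ d, h d ≤ (D : ℝ) ^ 2 / α :=
  hitting_time_bound_supermartingale_general D α hα q hq0 hq1 hsuper hmove h hh0 hrec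
end
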